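/- arXiv:1409.6779 — 3 statements merged into one kernel-verified Lean document; each statement's English description precedes it below -/
import Mathlib

section
/- Let Â = A + Z where A = Σ_{j=1}^s θ_j u_j v_jᵀ with θ_j > 0, {u_j} ⊂ ℝ^p and {v_j} ⊂ ℝ^r orthonormal systems, and Z a p×r matrix. Let Θ = diag(θ₁,…,θ_s), U = [u₁ … u_s], V = [v₁ … v_s], and define for t > 0 not a singular value of Z the 2s×2s matrix M(t) = [[t Vᵀ(t²I_r − ZᵀZ)⁻¹V, VᵀZᵀ(t²I_p − ZZᵀ)⁻¹U], [Uᵀ(t²I_p − ZZᵀ)⁻¹Z V, t Uᵀ(t²I_p − ZZᵀ)⁻¹U]] − [[0, Θ⁻¹],[Θ⁻¹, 0]]. Then any t > 0 with det M(t) = 0 is a singular value of Â, and conversely any singular value of Â that is not a singular value of Z satisfies det M(t) = 0. -/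
open Matrix

/-!
Put `K = [[t, -Z], [-Zᵀ, t]]`, `W = [[0, U], [V, 0]]` and `D = [[0, Θ], [Θ, 0]]`. Then
`K - W D Wᵀ = [[t, -Â], [-Âᵀ, t]]`, whose determinant is `t ^ (p - r) * det (t² - ÂᵀÂ)` by a Schur
complement. When `t` is not a singular value of `Z`, `K` is invertible with inverse
`[[t (t² - ZZᵀ)⁻¹, (t² - ZZᵀ)⁻¹ Z], [Zᵀ (t² - ZZᵀ)⁻¹, t (t² - ZᵀZ)⁻¹]]`, so that
`M(t) = Wᵀ K⁻¹ W - D⁻¹`. The matrix determinant lemma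
`det (K - W D Wᵀ) = det K * det (D⁻¹ - Wᵀ K⁻¹ W) * det D` then shows that `det M(t)` vanishes
exactly when `det (t² - ÂᵀÂ)` does.
-/

/-- `t` is a singular value of the real `p × r` matrix `M`:
`t ^ 2` is an eigenvalue of `Mᵀ * M`. -/
def IsSingVal {p r : ℕ} (M : Matrix (Fin p) (Fin r) ℝ) (t : ℝ) : Prop :=
  ∃ v : Fin r → ℝ, v ≠ 0 ∧ (Mᵀ * M) *ᵥ v = t ^ 2 • v

theorem isSingVal_iff_det_eq_zero {p r : ℕ} (M : Matrix (Fin p) (Fin r) ℝ) (t : ℝ) :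
    IsSingVal M t ↔ (t ^ 2 • (1 : Matrix (Fin r) (Fin r) ℝ) - Mᵀ * M).det = 0 := by
  rw [← exists_mulVec_eq_zero_iff]
  refine exists_congr fun w => and_congr_right fun _ => ?_
  rw [sub_mulVec, smul_mulVec, one_mulVec, sub_eq_zero, eq_comm]

namespace Matrix

theorem sum_smul_vecMulVec {R : Type*} [CommRing R] {m n k : Type*} [Fintype k] [DecidableEq k]
    (θ : k → R) (u : k → m → R) (v : k → n → R) :
    ∑ j, θ j • vecMulVec (u j) (v j) = (of u)ᵀ * diagonal θ * of v := by
  ext i l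
  rw [mul_apply]
  simp only [sum_apply, smul_apply, vecMulVec_apply, smul_eq_mul, mul_diagonal,
    transpose_apply, of_apply]
  exact Finset.sum_congr rfl fun j _ => by ring

variable {R : Type*} [CommRing R] {m n k : Type*} [Fintype m] [DecidableEq m] [Fintype n]
  [DecidableEq n] [Fintype k] [DecidableEq k]

theorem pow_card_mul_det_smul_one_sub_mul_comm (A : Matrix m n R) (B : Matrix n m R) (c : R) :
    c ^ Fintype.card n * (c • 1 - A * B).det = c ^ Fintype.card m * (c • 1 - B * A).det := by
  have h := congrArg (Polynomial.eval c) (charpoly_mul_comm' A B)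
  simpa only [Polynomial.eval_mul, Polynomial.eval_pow, Polynomial.eval_X, eval_charpoly,
    smul_one_eq_diagonal, scalar_apply] using h

theorem det_fromBlocks_smul_one (B : Matrix m n R) (C : Matrix n m R) (t : R) :
    t ^ Fintype.card n * (fromBlocks (t • 1) B C (t • 1)).det
      = t ^ Fintype.card m * (t ^ 2 • 1 - C * B).det := by
  have h : fromBlocks (t • 1) B C (t • 1) * fromBlocks 1 (-B) 0 (t • 1)
      = fromBlocks (t • 1) 0 C (t ^ 2 • 1 - C * B) := by
    rw [fromBlocks_multiply]
    congr 1 <;> simp [sq, smul_smul, sub_eq_neg_add]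
  have := congrArg det h
  rw [det_mul, det_fromBlocks_zero₂₁, det_fromBlocks_zero₁₂, det_smul, det_smul] at this
  simpa [mul_comm] using this

theorem mul_nonsing_inv_eq_nonsing_inv_mul {X : Matrix n n R} {Y : Matrix m m R}
    (hX : IsUnit X.det) (hY : IsUnit Y.det) {B : Matrix m n R} (h : B * X = Y * B) :
    B * X⁻¹ = Y⁻¹ * B := by
  calc B * X⁻¹ = Y⁻¹ * (Y * B) * X⁻¹ := by rw [nonsing_inv_mul_cancel_left Y B hY]
    _ = Y⁻¹ * B := by rw [← h, ← Matrix.mul_assoc, mul_nonsing_inv_cancel_right X (Y⁻¹ * B) hX]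

theorem fromBlocks_smul_one_neg_mul_resolvent (B : Matrix m n R) (C : Matrix n m R) (t : R)
    (hm : IsUnit (t ^ 2 • 1 - B * C).det) (hn : IsUnit (t ^ 2 • 1 - C * B).det) :
    fromBlocks (t • 1) (-B) (-C) (t • 1) *
      fromBlocks (t • (t ^ 2 • 1 - B * C)⁻¹) ((t ^ 2 • 1 - B * C)⁻¹ * B)
        (C * (t ^ 2 • 1 - B * C)⁻¹) (t • (t ^ 2 • 1 - C * B)⁻¹) = 1 := by
  have push : B * (t ^ 2 • 1 - C * B)⁻¹ = (t ^ 2 • 1 - B * C)⁻¹ * B :=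
    mul_nonsing_inv_eq_nonsing_inv_mul hn hm (by
      simp only [Matrix.mul_sub, Matrix.sub_mul, Matrix.mul_smul, Matrix.smul_mul,
        Matrix.mul_one, Matrix.one_mul, Matrix.mul_assoc])
  rw [fromBlocks_multiply, ← fromBlocks_one]
  congr 1
  · rw [Matrix.neg_mul, Matrix.smul_mul, Matrix.one_mul, smul_smul, ← sq, ← Matrix.mul_assoc,
      ← sub_eq_add_neg]
    simpa only [Matrix.sub_mul, Matrix.smul_mul, Matrix.one_mul] using mul_nonsing_inv _ hm
  · rw [Matrix.smul_mul, Matrix.one_mul, Matrix.neg_mul, Matrix.mul_smul, push, add_neg_cancel]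
  · rw [Matrix.neg_mul, Matrix.mul_smul, Matrix.smul_mul, Matrix.one_mul, neg_add_cancel]
  · rw [Matrix.neg_mul, Matrix.smul_mul, Matrix.one_mul, smul_smul, ← sq, ← push,
      ← Matrix.mul_assoc, neg_add_eq_sub]
    simpa only [Matrix.sub_mul, Matrix.smul_mul, Matrix.one_mul] using mul_nonsing_inv _ hn

theorem det_sub_mul_mul {K : Matrix m m R} {D : Matrix k k R} (hK : IsUnit K.det)
    (hD : IsUnit D.det) (W : Matrix m k R) (V : Matrix k m R) :
    (K - W * D * V).det = K.det * (D⁻¹ - V * K⁻¹ * W).det * D.det := by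
  have h1 : K - W * D * V = K + -(W * D) * V := by rw [Matrix.neg_mul, sub_eq_add_neg]
  have h2 : 1 + V * K⁻¹ * -(W * D) = (D⁻¹ - V * K⁻¹ * W) * D := by
    rw [Matrix.sub_mul, nonsing_inv_mul _ hD, Matrix.mul_neg, ← Matrix.mul_assoc, sub_eq_add_neg]
  rw [h1, det_add_mul _ _ hK, h2, det_mul, mul_assoc]

noncomputable def secularMatrix (Z : Matrix m n R) (U : Matrix m k R) (V : Matrix n k R)
    (Θ : Matrix k k R) (t : R) : Matrix (k ⊕ k) (k ⊕ k) R :=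
  fromBlocks (t • (Vᵀ * (t ^ 2 • (1 : Matrix n n R) - Zᵀ * Z)⁻¹ * V))
      (Vᵀ * Zᵀ * (t ^ 2 • (1 : Matrix m m R) - Z * Zᵀ)⁻¹ * U)
      (Uᵀ * (t ^ 2 • (1 : Matrix m m R) - Z * Zᵀ)⁻¹ * Z * V)
      (t • (Uᵀ * (t ^ 2 • (1 : Matrix m m R) - Z * Zᵀ)⁻¹ * U)) -
    fromBlocks 0 Θ⁻¹ Θ⁻¹ 0

theorem det_secularMatrix_eq_zero_iff {𝕜 : Type*} [Field 𝕜] (Z : Matrix m n 𝕜)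
    (U : Matrix m k 𝕜) (V : Matrix n k 𝕜) {Θ : Matrix k k 𝕜} (hΘ : IsUnit Θ.det) (hΘT : Θᵀ = Θ)
    {t : 𝕜} (ht : t ≠ 0) (hZ : IsUnit (t ^ 2 • 1 - Zᵀ * Z).det) :
    (secularMatrix Z U V Θ t).det = 0 ↔
      (t ^ 2 • 1 - (U * Θ * Vᵀ + Z)ᵀ * (U * Θ * Vᵀ + Z)).det = 0 := by
  have hZ' : IsUnit (t ^ 2 • 1 - Z * Zᵀ).det := by
    rw [isUnit_iff_ne_zero] at hZ ⊢
    intro h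
    have := pow_card_mul_det_smul_one_sub_mul_comm Z Zᵀ (t ^ 2)
    rw [h, mul_zero] at this
    exact mul_ne_zero (pow_ne_zero _ (pow_ne_zero _ ht)) hZ this.symm
  set K : Matrix (m ⊕ n) (m ⊕ n) 𝕜 := fromBlocks (t • 1) (-Z) (-Zᵀ) (t • 1)
  have hKinv := fromBlocks_smul_one_neg_mul_resolvent Z Zᵀ t hZ' hZ
  have hK : IsUnit K.det := isUnit_det_of_right_inverse hKinv
  set W : Matrix (m ⊕ n) (k ⊕ k) 𝕜 := fromBlocks 0 U V 0
  set D : Matrix (k ⊕ k) (k ⊕ k) 𝕜 := fromBlocks 0 Θ Θ 0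
  have hDinv : D * fromBlocks 0 Θ⁻¹ Θ⁻¹ 0 = 1 := by
    rw [fromBlocks_multiply, ← fromBlocks_one]
    simp [mul_nonsing_inv _ hΘ]
  have hD : IsUnit D.det := isUnit_det_of_right_inverse hDinv
  have hsec : secularMatrix Z U V Θ t = -(D⁻¹ - Wᵀ * K⁻¹ * W) := by
    rw [inv_eq_right_inv hKinv, inv_eq_right_inv hDinv, neg_sub, secularMatrix,
      fromBlocks_transpose, fromBlocks_multiply, fromBlocks_multiply]
    congr 2 <;> simp [Matrix.mul_assoc]
  have hKhat : fromBlocks (t • 1) (-(U * Θ * Vᵀ + Z)) (-(U * Θ * Vᵀ + Z)ᵀ) (t • 1)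
      = K - W * D * Wᵀ := by
    rw [fromBlocks_transpose, fromBlocks_multiply, fromBlocks_multiply, sub_eq_add_neg,
      fromBlocks_neg, fromBlocks_add]
    congr 1 <;> simp [Matrix.transpose_mul, hΘT, Matrix.mul_assoc]
  calc (secularMatrix Z U V Θ t).det = 0
      ↔ t ^ Fintype.card n * (K.det * (D⁻¹ - Wᵀ * K⁻¹ * W).det * D.det) = 0 := by
        rw [hsec, det_neg]
        simp [ht, hK.ne_zero, hD.ne_zero]
    _ ↔ t ^ Fintype.card m * (t ^ 2 • 1 - (U * Θ * Vᵀ + Z)ᵀ * (U * Θ * Vᵀ + Z)).det = 0 := by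
        rw [← det_sub_mul_mul hK hD, ← hKhat, det_fromBlocks_smul_one, Matrix.neg_mul,
          Matrix.mul_neg, neg_neg]
    _ ↔ _ := by simp [ht]

end Matrix

theorem stmt7_general {p r s : ℕ} (θ : Fin s → ℝ) (hθ : ∀ j, 0 < θ j)
    (u : Fin s → Fin p → ℝ) (v : Fin s → Fin r → ℝ)
    (Z : Matrix (Fin p) (Fin r) ℝ) :
    let A : Matrix (Fin p) (Fin r) ℝ := ∑ j, θ j • vecMulVec (u j) (v j)
    let Ahat := A + Z
    let Θ : Matrix (Fin s) (Fin s) ℝ := diagonal θ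
    let Um : Matrix (Fin p) (Fin s) ℝ := Matrix.of fun i j => u j i
    let Vm : Matrix (Fin r) (Fin s) ℝ := Matrix.of fun i j => v j i
    let M : ℝ → Matrix (Fin s ⊕ Fin s) (Fin s ⊕ Fin s) ℝ := fun t =>
      fromBlocks (t • (Vmᵀ * (t ^ 2 • (1 : Matrix (Fin r) (Fin r) ℝ) - Zᵀ * Z)⁻¹ * Vm))
        (Vmᵀ * Zᵀ * (t ^ 2 • (1 : Matrix (Fin p) (Fin p) ℝ) - Z * Zᵀ)⁻¹ * Um)
        (Umᵀ * (t ^ 2 • (1 : Matrix (Fin p) (Fin p) ℝ) - Z * Zᵀ)⁻¹ * Z * Vm)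
        (t • (Umᵀ * (t ^ 2 • (1 : Matrix (Fin p) (Fin p) ℝ) - Z * Zᵀ)⁻¹ * Um)) -
      fromBlocks 0 Θ⁻¹ Θ⁻¹ 0
    ∀ t : ℝ, 0 < t → ¬ IsSingVal Z t →
      ((M t).det = 0 → IsSingVal Ahat t) ∧ (IsSingVal Ahat t → (M t).det = 0) := by
  intro A Ahat Θ Um Vm M t ht hZ
  have hA : A = Um * Θ * Vmᵀ := sum_smul_vecMulVec θ u v
  have hΘ : IsUnit Θ.det := by
    rw [det_diagonal, isUnit_iff_ne_zero, Finset.prod_ne_zero_iff]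
    exact fun j _ => (hθ j).ne'
  rw [isSingVal_iff_det_eq_zero] at hZ
  have key := det_secularMatrix_eq_zero_iff Z Um Vm hΘ (diagonal_transpose θ) ht.ne'
    (isUnit_iff_ne_zero.mpr hZ)
  rw [isSingVal_iff_det_eq_zero, show Ahat = Um * Θ * Vmᵀ + Z by rw [← hA]]
  exact ⟨key.1, key.2⟩

theorem stmt7 {p r s : ℕ} (θ : Fin s → ℝ) (hθ : ∀ j, 0 < θ j)
    (u : Fin s → Fin p → ℝ) (v : Fin s → Fin r → ℝ)
    (hu : ∀ i j, u i ⬝ᵥ u j = if i = j then (1 : ℝ) else 0)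
    (hv : ∀ i j, v i ⬝ᵥ v j = if i = j then (1 : ℝ) else 0)
    (Z : Matrix (Fin p) (Fin r) ℝ) :
    let A : Matrix (Fin p) (Fin r) ℝ := ∑ j, θ j • vecMulVec (u j) (v j)
    let Ahat := A + Z
    let Θ : Matrix (Fin s) (Fin s) ℝ := diagonal θ
    let Um : Matrix (Fin p) (Fin s) ℝ := Matrix.of fun i j => u j i
    let Vm : Matrix (Fin r) (Fin s) ℝ := Matrix.of fun i j => v j i
    let M : ℝ → Matrix (Fin s ⊕ Fin s) (Fin s ⊕ Fin s) ℝ := fun t =>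
      fromBlocks (t • (Vmᵀ * (t ^ 2 • (1 : Matrix (Fin r) (Fin r) ℝ) - Zᵀ * Z)⁻¹ * Vm))
        (Vmᵀ * Zᵀ * (t ^ 2 • (1 : Matrix (Fin p) (Fin p) ℝ) - Z * Zᵀ)⁻¹ * Um)
        (Umᵀ * (t ^ 2 • (1 : Matrix (Fin p) (Fin p) ℝ) - Z * Zᵀ)⁻¹ * Z * Vm)
        (t • (Umᵀ * (t ^ 2 • (1 : Matrix (Fin p) (Fin p) ℝ) - Z * Zᵀ)⁻¹ * Um)) -
      fromBlocks 0 Θ⁻¹ Θ⁻¹ 0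
    ∀ t : ℝ, 0 < t → ¬ IsSingVal Z t →
      ((M t).det = 0 → IsSingVal Ahat t) ∧ (IsSingVal Ahat t → (M t).det = 0) :=
  stmt7_general θ hθ u v Z
end

section
/- For β > 0, the Stieltjes transform G(z) = ∫ dμ(t)/(z−t) of the Marchenko–Pastur measure μ with parameter β satisfies G(z) = (1/(2z))·[1 − β + z − √((1 − β + z)² − 4z)] for real z greater than the upper edge (√β + 1)² of the support, where the square root is taken positive. -/
/-!
Write `a = (√β - 1)²`, `b = (√β + 1)²`, so that `4β - (β + 1 - x)² = (b - x)(x - a)`. The partial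
fractions `1 / (x (z - x)) = (1 / z) (1 / (z - x) - 1 / (0 - x))` reduce the transform to the
integrals `∫_a^b √((b - x)(x - a)) / (c - x) dx` with `c = z` right of the support and `c = 0` left
of it (on its edge when `β = 1`). The affine map of `[a, b]` onto `[-1, 1]` turns these into
`∫ √(1 - s²) / (p - s) ds` with `|p| ≥ 1`, which is `π (p - √(p² - 1))` for `p ≥ 1` by an explicit
primitive, and follows by reflection for `p ≤ -1`. As the integrand has constant sign, the primitive
also yields integrability in the improper case `p = ±1`. Finally `√(ab) = |β - 1|`, and adding the
atom at `0` turns `-|β - 1|` into `1 - β`.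
-/

open Real Set MeasureTheory intervalIntegral

/-- A primitive of `√(1 - s²) / (p - s)` for `p ≥ 1`, from `1 - s² = (p - s)(p + s) - (p² - 1)`:
the first two terms integrate `(p + s) / √(1 - s²)`, the last one `(p² - 1) / ((p - s) √(1 - s²))`
and vanishes identically when `p = 1`. -/
noncomputable def semicirclePrimitive (p s : ℝ) : ℝ :=
  p * arcsin s - √(1 - s ^ 2) - √(p ^ 2 - 1) * arcsin ((p * s - 1) / (p - s))

theorem hasDerivAt_arcsin_div_sub {p s : ℝ} (hp : 1 < p) (hs : s ∈ Ioo (-1 : ℝ) 1) :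
    HasDerivAt (fun s => arcsin ((p * s - 1) / (p - s)))
      (√(p ^ 2 - 1) / ((p - s) * √(1 - s ^ 2))) s := by
  obtain ⟨hs₁, hs₂⟩ := hs
  have hps : 0 < p - s := by linarith
  have hq : 0 < p ^ 2 - 1 := by nlinarith
  have h1s : 0 < 1 - s ^ 2 := by nlinarith
  have hu : HasDerivAt (fun s => (p * s - 1) / (p - s)) ((p ^ 2 - 1) / (p - s) ^ 2) s := by
    refine ((((hasDerivAt_id s).const_mul p).sub_const 1).div
      ((hasDerivAt_id s).const_sub p) hps.ne').congr_deriv ?_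
    simp only [id_eq]
    ring
  set u := (p * s - 1) / (p - s)
  have h1u : 1 - u ^ 2 = (p ^ 2 - 1) * (1 - s ^ 2) / (p - s) ^ 2 := by
    simp only [u]; field_simp; ring
  have hu_sq : u ^ 2 < 1 := by
    have : 0 < 1 - u ^ 2 := by rw [h1u]; positivity
    linarith
  obtain ⟨hu₁, hu₂⟩ := abs_lt.1 ((sq_lt_one_iff_abs_lt_one u).1 hu_sq)
  refine ((hasDerivAt_arcsin hu₁.ne' hu₂.ne).comp s hu).congr_deriv ?_
  rw [h1u, sqrt_div' _ (sq_nonneg _), sqrt_sq hps.le, sqrt_mul hq.le]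
  field_simp
  rw [sq_sqrt hq.le]

theorem hasDerivAt_semicirclePrimitive {p s : ℝ} (hp : 1 ≤ p) (hs : s ∈ Ioo (-1 : ℝ) 1) :
    HasDerivAt (semicirclePrimitive p) (√(1 - s ^ 2) / (p - s)) s := by
  have h1s : 0 < 1 - s ^ 2 := by nlinarith [hs.1, hs.2]
  have hps : 0 < p - s := by linarith [hs.2]
  have h_arcsin : HasDerivAt arcsin (1 / √(1 - s ^ 2)) s :=
    hasDerivAt_arcsin (by linarith [hs.1]) (by linarith [hs.2])
  have h_sqrt : HasDerivAt (fun s => √(1 - s ^ 2)) (-s / √(1 - s ^ 2)) s := by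
    refine (((hasDerivAt_pow 2 s).const_sub 1).sqrt h1s.ne').congr_deriv ?_
    field_simp
    ring
  have h_last : HasDerivAt (fun s => √(p ^ 2 - 1) * arcsin ((p * s - 1) / (p - s)))
      ((p ^ 2 - 1) / ((p - s) * √(1 - s ^ 2))) s := by
    rcases hp.eq_or_lt with rfl | hp
    · simpa using hasDerivAt_const s (0 : ℝ)
    · refine ((hasDerivAt_arcsin_div_sub hp hs).const_mul √(p ^ 2 - 1)).congr_deriv ?_
      rw [mul_div_assoc', mul_self_sqrt (by nlinarith)]
  refine (((h_arcsin.const_mul p).sub h_sqrt).sub h_last).congr_deriv ?_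
  field_simp
  linear_combination (-1) * sq_sqrt h1s.le

theorem continuousOn_semicirclePrimitive {p : ℝ} (hp : 1 ≤ p) :
    ContinuousOn (semicirclePrimitive p) (Icc (-1) 1) := by
  rcases hp.eq_or_lt with rfl | hp
  · unfold semicirclePrimitive
    norm_num
    fun_prop
  · refine ContinuousOn.sub (by fun_prop) (continuousOn_const.mul
      (continuous_arcsin.comp_continuousOn (.div (by fun_prop) (by fun_prop) ?_)))
    intro s hs
    linarith [hs.2]

theorem semicirclePrimitive_one (p : ℝ) :
    semicirclePrimitive p 1 = (p - √(p ^ 2 - 1)) * (π / 2) := by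
  rcases eq_or_ne p 1 with rfl | hp
  · simp [semicirclePrimitive]
  · simp only [semicirclePrimitive, mul_one, div_self (sub_ne_zero.2 hp), arcsin_one]
    norm_num
    ring

theorem semicirclePrimitive_neg_one {p : ℝ} (hp : p + 1 ≠ 0) :
    semicirclePrimitive p (-1) = -((p - √(p ^ 2 - 1)) * (π / 2)) := by
  have : (p * -1 - 1) / (p - -1) = -1 := by
    rw [div_eq_iff (by rwa [sub_neg_eq_add])]; ring
  simp only [semicirclePrimitive, this, arcsin_neg, arcsin_one]
  norm_num
  ring

theorem intervalIntegrable_sqrt_one_sub_sq_div_sub_of_one_le {p : ℝ} (hp : 1 ≤ p) :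
    IntervalIntegrable (fun s => √(1 - s ^ 2) / (p - s)) volume (-1) 1 :=
  (intervalIntegrable_iff_integrableOn_Ioc_of_le (by norm_num)).2 <|
    integrableOn_deriv_of_nonneg (continuousOn_semicirclePrimitive hp)
      (fun _ hs => hasDerivAt_semicirclePrimitive hp hs)
      fun _ hs => div_nonneg (sqrt_nonneg _) (by linarith [hs.2])

theorem integral_sqrt_one_sub_sq_div_sub_of_one_le {p : ℝ} (hp : 1 ≤ p) :
    ∫ s in (-1 : ℝ)..1, √(1 - s ^ 2) / (p - s) = π * (p - √(p ^ 2 - 1)) := by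
  rw [integral_eq_sub_of_hasDerivAt_of_le (by norm_num) (continuousOn_semicirclePrimitive hp)
    (fun _ hs => hasDerivAt_semicirclePrimitive hp hs)
    (intervalIntegrable_sqrt_one_sub_sq_div_sub_of_one_le hp),
    semicirclePrimitive_one, semicirclePrimitive_neg_one (by linarith)]
  ring

theorem sqrt_one_sub_sq_div_sub_neg (p s : ℝ) :
    √(1 - s ^ 2) / (p - s) = -(√(1 - (-s) ^ 2) / (-p - -s)) := by
  rw [neg_sq, show -p - -s = -(p - s) by ring, div_neg, neg_neg]

theorem intervalIntegrable_sqrt_one_sub_sq_div_sub_of_le_neg_one {p : ℝ} (hp : p ≤ -1) :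
    IntervalIntegrable (fun s => √(1 - s ^ 2) / (p - s)) volume (-1) 1 := by
  have h := intervalIntegrable_sqrt_one_sub_sq_div_sub_of_one_le (p := -p) (by linarith)
  rw [IntervalIntegrable.iff_comp_neg, neg_neg] at h
  convert h.symm.neg using 1
  funext s
  exact sqrt_one_sub_sq_div_sub_neg p s

theorem integral_sqrt_one_sub_sq_div_sub_of_le_neg_one {p : ℝ} (hp : p ≤ -1) :
    ∫ s in (-1 : ℝ)..1, √(1 - s ^ 2) / (p - s) = π * (p + √(p ^ 2 - 1)) := by
  simp_rw [sqrt_one_sub_sq_div_sub_neg p, intervalIntegral.integral_neg,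
    integral_comp_neg fun s => √(1 - s ^ 2) / (-p - s), neg_neg,
    integral_sqrt_one_sub_sq_div_sub_of_one_le (p := -p) (by linarith), neg_sq]
  ring

theorem IntervalIntegrable.of_comp_mul_add {f : ℝ → ℝ} {a b r m : ℝ} (hr : r ≠ 0)
    (h : IntervalIntegrable (fun s => f (r * s + m)) volume a b) :
    IntervalIntegrable f volume (r * a + m) (r * b + m) := by
  simpa [hr, mul_comm r] using (h.comp_mul_left (c := r⁻¹)).comp_sub_right m

theorem sqrt_sub_mul_sub_div_sub_affine {a b : ℝ} (hab : a < b) (c s : ℝ) :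
    √((b - ((b - a) / 2 * s + (a + b) / 2)) * ((b - a) / 2 * s + (a + b) / 2 - a)) /
        (c - ((b - a) / 2 * s + (a + b) / 2)) =
      √(1 - s ^ 2) / ((2 * c - a - b) / (b - a) - s) := by
  have hr : 0 < (b - a) / 2 := by linarith
  have hba : b - a ≠ 0 := by linarith
  rw [show (b - ((b - a) / 2 * s + (a + b) / 2)) * ((b - a) / 2 * s + (a + b) / 2 - a) =
      ((b - a) / 2) ^ 2 * (1 - s ^ 2) by ring,
    show c - ((b - a) / 2 * s + (a + b) / 2) = (b - a) / 2 * ((2 * c - a - b) / (b - a) - s) by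
      field_simp; ring,
    sqrt_mul (sq_nonneg _), sqrt_sq hr.le, mul_div_mul_left _ _ hr.ne']

theorem intervalIntegrable_sqrt_sub_mul_sub_div_sub {a b c : ℝ} (hab : a < b)
    (hc : c ∉ Ioo a b) :
    IntervalIntegrable (fun x => √((b - x) * (x - a)) / (c - x)) volume a b := by
  have hp : (2 * c - a - b) / (b - a) ≤ -1 ∨ 1 ≤ (2 * c - a - b) / (b - a) := by
    rw [le_div_iff₀ (by linarith), div_le_iff₀ (by linarith)]
    rw [mem_Ioo, not_and_or, not_lt, not_lt] at hc
    rcases hc with hc | hc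
    · left; linarith
    · right; linarith
  have h := hp.elim intervalIntegrable_sqrt_one_sub_sq_div_sub_of_le_neg_one
    intervalIntegrable_sqrt_one_sub_sq_div_sub_of_one_le
  simp_rw [← sqrt_sub_mul_sub_div_sub_affine hab c] at h
  convert h.of_comp_mul_add (f := fun x => √((b - x) * (x - a)) / (c - x))
    (by linarith : (b - a) / 2 ≠ 0) using 1 <;> ring

theorem integral_sqrt_sub_mul_sub_div_sub {a b : ℝ} (hab : a < b) (c : ℝ) :
    ∫ x in a..b, √((b - x) * (x - a)) / (c - x) =
      (b - a) / 2 * ∫ s in (-1 : ℝ)..1, √(1 - s ^ 2) / ((2 * c - a - b) / (b - a) - s) := by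
  simp_rw [← sqrt_sub_mul_sub_div_sub_affine hab c]
  rw [integral_comp_mul_add (fun x => √((b - x) * (x - a)) / (c - x)) (by linarith), smul_eq_mul,
    mul_inv_cancel_left₀ (by linarith)]
  congr 1 <;> ring

theorem half_sub_mul_sqrt_sq_sub_one {a b : ℝ} (hab : a < b) (c : ℝ) :
    (b - a) / 2 * √(((2 * c - a - b) / (b - a)) ^ 2 - 1) = √((c - a) * (c - b)) := by
  have hr : 0 < (b - a) / 2 := by linarith
  have hba : b - a ≠ 0 := by linarith
  rw [← sqrt_sq hr.le, ← sqrt_mul (sq_nonneg _)]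
  congr 1
  field_simp
  ring

theorem integral_sqrt_sub_mul_sub_div_sub_of_le {a b c : ℝ} (hab : a < b) (hc : b ≤ c) :
    ∫ x in a..b, √((b - x) * (x - a)) / (c - x) =
      π * (c - (a + b) / 2 - √((c - a) * (c - b))) := by
  rw [integral_sqrt_sub_mul_sub_div_sub hab, integral_sqrt_one_sub_sq_div_sub_of_one_le
    (by rw [le_div_iff₀ (by linarith)]; linarith), ← half_sub_mul_sqrt_sq_sub_one hab]
  have hba : b - a ≠ 0 := by linarith
  field_simp
  ring

theorem integral_sqrt_sub_mul_sub_div_sub_of_ge {a b c : ℝ} (hab : a < b) (hc : c ≤ a) :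
    ∫ x in a..b, √((b - x) * (x - a)) / (c - x) =
      π * (c - (a + b) / 2 + √((c - a) * (c - b))) := by
  rw [integral_sqrt_sub_mul_sub_div_sub hab, integral_sqrt_one_sub_sq_div_sub_of_le_neg_one
    (by rw [div_le_iff₀ (by linarith)]; linarith), ← half_sub_mul_sqrt_sq_sub_one hab]
  have hba : b - a ≠ 0 := by linarith
  field_simp
  ring

theorem integral_sqrt_sub_mul_sub_div_mul_sub {a b z : ℝ} (ha : 0 ≤ a) (hab : a < b)
    (hbz : b ≤ z) :
    ∫ x in a..b, √((b - x) * (x - a)) / (x * (z - x)) =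
      π / z * (z - √((z - a) * (z - b)) - √(a * b)) := by
  have hz : 0 < z := by linarith
  have h_split : ∀ x ∈ uIcc a b, √((b - x) * (x - a)) / (x * (z - x)) =
      z⁻¹ * (√((b - x) * (x - a)) / (z - x) - √((b - x) * (x - a)) / (0 - x)) := by
    intro x hx
    rw [uIcc_of_le hab.le] at hx
    rcases hx.1.eq_or_lt with rfl | hax
    · simp
    rcases hx.2.eq_or_lt with rfl | hxb
    · simp
    have : x ≠ 0 := by linarith
    have : z - x ≠ 0 := by linarith
    field_simp
    ring
  rw [integral_congr h_split, intervalIntegral.integral_const_mul,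
    intervalIntegral.integral_sub
      (intervalIntegrable_sqrt_sub_mul_sub_div_sub hab fun h => by linarith [h.2])
      (intervalIntegrable_sqrt_sub_mul_sub_div_sub hab fun h => by linarith [h.1]),
    integral_sqrt_sub_mul_sub_div_sub_of_le hab hbz, integral_sqrt_sub_mul_sub_div_sub_of_ge hab ha,
    show (0 - a) * (0 - b) = a * b by ring]
  field_simp
  ring

theorem stmt11 (β : ℝ) (hβ : 0 < β) (z : ℝ) (hz : (Real.sqrt β + 1) ^ 2 < z) :
    (∫ x in Set.Icc ((Real.sqrt β - 1) ^ 2) ((Real.sqrt β + 1) ^ 2),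
        (1 / (2 * Real.pi * x)) * Real.sqrt (4 * β - (β + 1 - x) ^ 2) / (z - x)) +
      max (1 - β) 0 / z =
    (1 / (2 * z)) * (1 - β + z - Real.sqrt ((1 - β + z) ^ 2 - 4 * z)) := by
  have hβ_sq : √β ^ 2 = β := sq_sqrt hβ.le
  have hab : (√β - 1) ^ 2 < (√β + 1) ^ 2 := by nlinarith [sqrt_pos.2 hβ]
  have hz0 : 0 < z := (sq_nonneg _).trans_lt hz
  have h_density : ∀ x, 1 / (2 * π * x) * √(4 * β - (β + 1 - x) ^ 2) / (z - x) =
      (2 * π)⁻¹ * (√(((√β + 1) ^ 2 - x) * (x - (√β - 1) ^ 2)) / (x * (z - x))) := by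
    intro x
    rw [show 4 * β - (β + 1 - x) ^ 2 = ((√β + 1) ^ 2 - x) * (x - (√β - 1) ^ 2) by
      linear_combination (β + √β ^ 2 - 2 - 2 * x) * hβ_sq]
    simp only [div_eq_mul_inv, mul_inv]
    ring
  rw [integral_Icc_eq_integral_Ioc, ← integral_of_le hab.le]
  simp_rw [h_density]
  rw [intervalIntegral.integral_const_mul,
    integral_sqrt_sub_mul_sub_div_mul_sub (sq_nonneg _) hab hz.le,
    show (z - (√β - 1) ^ 2) * (z - (√β + 1) ^ 2) = (1 - β + z) ^ 2 - 4 * z by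
      linear_combination (√β ^ 2 + β - 2 - 2 * z) * hβ_sq,
    show (√β - 1) ^ 2 * (√β + 1) ^ 2 = (β - 1) ^ 2 by
      linear_combination (√β ^ 2 + β - 2) * hβ_sq,
    sqrt_sq_eq_abs]
  have h_atom : 2 * max (1 - β) 0 = 1 - β + |β - 1| := by
    rcases le_total β 1 with h | h
    · rw [max_eq_left (by linarith), abs_of_nonpos (by linarith)]; ring
    · rw [max_eq_right (by linarith), abs_of_nonneg (by linarith)]; ring
  field_simp
  linear_combination h_atom
end

section
/- Fix λ > 0 and β > 0, and let G(z) = (1/(2z(1+z)))·[1 − β + (2 + λβ)z − √((λβz)² − 2β(λ(1+β)+2)z + (β−1)²)] for real z > x₂, where x₂ = (1/(λ²β))[(1+β)λ + 2 + 2√(λ²β + λ(β+1) + 1)]. Then G is the Stieltjes transform of the probability measure with density p(x) = (1/(2π))·√(−(β−1)² + 2β[(1+β)λ+2]x − β²λ²x²)/(x(x+1)) on [x₁,x₂] plus an atom of mass max(1−β,0) at 0. -/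
/-!
Completing the square, the radicand of the density is `(λβ)² (s² - (x - m)²)`, where `[m - s, m + s]`
is the support `[x₁, x₂]`. Partial fractions in `1 / (x (x + 1) (z - x))` reduce the transform to three
Cauchy integrals of the semicircle, `∫_{-s}^{s} √(s² - u²) / (u + e) du = π (e - √(e² - s²))` for
`e ≥ s`, taken at `e = m`, `m + 1` and `z - m`. These are computed from the splitting
`√(s² - u²) / (u + e) = (e - u) / √(s² - u²) - (e² - s²) / ((u + e) √(s² - u²))`, whose two terms
have arcsin antiderivatives. The term at `e = m` produces `√(m² - s²) = |β - 1| / (λβ)`, and the atom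
`max (1 - β) 0` turns this `|β - 1|` into `1 - β`.
-/

open Real MeasureTheory intervalIntegral Set

section Semicircle

variable {s e u : ℝ}

theorem hasDerivAt_sqrt_sq_sub_sq_add_mul_arcsin (hs : 0 < s) (hu : u ∈ Ioo (-s) s) :
    HasDerivAt (fun u => √(s ^ 2 - u ^ 2) + e * arcsin (u / s))
      ((e - u) / √(s ^ 2 - u ^ 2)) u := by
  obtain ⟨hu₁, hu₂⟩ := hu
  have hpos : 0 < s ^ 2 - u ^ 2 := by nlinarith
  have hsqrt := ((hasDerivAt_pow 2 u).const_sub (s ^ 2)).sqrt hpos.ne'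
  have harcsin := (hasDerivAt_arcsin (x := u / s) (by rw [Ne, div_eq_iff hs.ne']; linarith)
    (by rw [Ne, div_eq_iff hs.ne']; linarith)).comp u ((hasDerivAt_id u).div_const s)
  refine (hsqrt.add (harcsin.const_mul e)).congr_deriv ?_
  have hsqrt_div : √(1 - (u / s) ^ 2) = √(s ^ 2 - u ^ 2) / s := by
    rw [show 1 - (u / s) ^ 2 = (s ^ 2 - u ^ 2) / s ^ 2 by field_simp, sqrt_div hpos.le,
      sqrt_sq hs.le]
  have : 0 < √(s ^ 2 - u ^ 2) := sqrt_pos.2 hpos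
  rw [hsqrt_div]
  field_simp
  ring

theorem hasDerivAt_sqrt_mul_arcsin (hs : 0 < s) (hse : s < e) (hu : u ∈ Ioo (-s) s) :
    HasDerivAt (fun u => √(e ^ 2 - s ^ 2) * arcsin ((s ^ 2 + e * u) / (s * (u + e))))
      ((e ^ 2 - s ^ 2) / ((u + e) * √(s ^ 2 - u ^ 2))) u := by
  obtain ⟨hu₁, hu₂⟩ := hu
  have hpos : 0 < s ^ 2 - u ^ 2 := by nlinarith
  have hue : 0 < u + e := by linarith
  have hden : 0 < s * (u + e) := mul_pos hs hue
  have hw₁ : -1 < (s ^ 2 + e * u) / (s * (u + e)) := by rw [lt_div_iff₀ hden]; nlinarith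
  have hw₂ : (s ^ 2 + e * u) / (s * (u + e)) < 1 := by rw [div_lt_one hden]; nlinarith
  have hquot := (((hasDerivAt_id u).const_mul e).const_add (s ^ 2)).div
    (((hasDerivAt_id u).add_const e).const_mul s) hden.ne'
  refine (((hasDerivAt_arcsin hw₁.ne' hw₂.ne).comp u hquot).const_mul _).congr_deriv ?_
  have hsqrt : √(1 - ((s ^ 2 + e * u) / (s * (u + e))) ^ 2)
      = √(e ^ 2 - s ^ 2) * √(s ^ 2 - u ^ 2) / (s * (u + e)) := by
    rw [show 1 - ((s ^ 2 + e * u) / (s * (u + e))) ^ 2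
        = (e ^ 2 - s ^ 2) * (s ^ 2 - u ^ 2) / (s * (u + e)) ^ 2 by field_simp; ring,
      sqrt_div (mul_nonneg (by nlinarith) hpos.le), sqrt_sq hden.le, sqrt_mul (by nlinarith)]
  have hk : 0 < √(e ^ 2 - s ^ 2) := sqrt_pos.2 (by nlinarith)
  have ht : 0 < √(s ^ 2 - u ^ 2) := sqrt_pos.2 hpos
  rw [hsqrt]
  simp only [id, mul_one]
  field_simp
  ring

theorem intervalIntegrable_sub_div_sqrt_sq_sub_sq (hs : 0 < s) (hse : s ≤ e) :
    IntervalIntegrable (fun u => (e - u) / √(s ^ 2 - u ^ 2)) volume (-s) s :=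
  (intervalIntegrable_iff_integrableOn_Ioc_of_le (by linarith)).2 <|
    integrableOn_deriv_of_nonneg (by fun_prop)
      (fun _ hu => hasDerivAt_sqrt_sq_sub_sq_add_mul_arcsin hs hu)
      (fun _ hu => div_nonneg (by linarith [hu.2]) (sqrt_nonneg _))

theorem integral_sub_div_sqrt_sq_sub_sq (hs : 0 < s) (hse : s ≤ e) :
    ∫ u in -s..s, (e - u) / √(s ^ 2 - u ^ 2) = π * e := by
  rw [integral_eq_sub_of_hasDerivAt_of_le (by linarith) (by fun_prop)
    (fun _ hu => hasDerivAt_sqrt_sq_sub_sq_add_mul_arcsin hs hu)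
    (intervalIntegrable_sub_div_sqrt_sq_sub_sq hs hse)]
  simp [neg_div, div_self hs.ne', arcsin_one]
  ring

theorem continuousOn_sqrt_mul_arcsin (hs : 0 < s) (hse : s < e) :
    ContinuousOn (fun u => √(e ^ 2 - s ^ 2) * arcsin ((s ^ 2 + e * u) / (s * (u + e))))
      (Icc (-s) s) :=
  continuousOn_const.mul <| continuous_arcsin.comp_continuousOn <|
    ContinuousOn.div (by fun_prop) (by fun_prop) fun u hu =>
      (mul_pos hs (by linarith [hu.1])).ne'

theorem intervalIntegrable_sq_sub_sq_div_mul_sqrt (hs : 0 < s) (hse : s ≤ e) :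
    IntervalIntegrable (fun u => (e ^ 2 - s ^ 2) / ((u + e) * √(s ^ 2 - u ^ 2)))
      volume (-s) s := by
  rcases hse.eq_or_lt with rfl | hlt
  · simp
  refine (intervalIntegrable_iff_integrableOn_Ioc_of_le (by linarith)).2 <|
    integrableOn_deriv_of_nonneg (continuousOn_sqrt_mul_arcsin hs hlt)
      (fun _ hu => hasDerivAt_sqrt_mul_arcsin hs hlt hu) fun u hu => ?_
  have hue : 0 < u + e := by linarith [hu.1]
  exact div_nonneg (by nlinarith) (mul_nonneg hue.le (sqrt_nonneg _))

theorem integral_sq_sub_sq_div_mul_sqrt (hs : 0 < s) (hse : s ≤ e) :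
    ∫ u in -s..s, (e ^ 2 - s ^ 2) / ((u + e) * √(s ^ 2 - u ^ 2)) = π * √(e ^ 2 - s ^ 2) := by
  rcases hse.eq_or_lt with rfl | hlt
  · simp
  rw [integral_eq_sub_of_hasDerivAt_of_le (by linarith) (continuousOn_sqrt_mul_arcsin hs hlt)
    (fun _ hu => hasDerivAt_sqrt_mul_arcsin hs hlt hu)
    (intervalIntegrable_sq_sub_sq_div_mul_sqrt hs hse)]
  have h₁ : (s ^ 2 + e * s) / (s * (s + e)) = 1 := by
    rw [div_eq_one_iff_eq (mul_pos hs (by linarith)).ne']; ring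
  have h₂ : (s ^ 2 + e * -s) / (s * (-s + e)) = -1 := by
    rw [div_eq_iff (mul_pos hs (by linarith)).ne']; ring
  rw [h₁, h₂, arcsin_one, arcsin_neg_one]
  ring

/- At `u = ±s` both sides vanish because `x / 0 = 0`, so the identity holds on the closed interval,
also when `e = s`. -/
theorem sqrt_sq_sub_sq_div_add_eq (hse : s ≤ e) (hu : u ∈ Icc (-s) s) :
    √(s ^ 2 - u ^ 2) / (u + e)
      = (e - u) / √(s ^ 2 - u ^ 2) - (e ^ 2 - s ^ 2) / ((u + e) * √(s ^ 2 - u ^ 2)) := by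
  rcases (sqrt_nonneg (s ^ 2 - u ^ 2)).eq_or_lt with ht | ht
  · simp [← ht]
  have hpos : 0 < s ^ 2 - u ^ 2 := sqrt_pos.1 ht
  have hue : 0 < u + e := by nlinarith [hu.2]
  have ht2 := sq_sqrt hpos.le
  field_simp
  linear_combination ht2

theorem intervalIntegrable_sqrt_sq_sub_sq_div_add (hs : 0 < s) (hse : s ≤ e) :
    IntervalIntegrable (fun u => √(s ^ 2 - u ^ 2) / (u + e)) volume (-s) s := by
  refine ((intervalIntegrable_sub_div_sqrt_sq_sub_sq hs hse).sub
    (intervalIntegrable_sq_sub_sq_div_mul_sqrt hs hse)).congr fun u hu => ?_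
  rw [uIoc_of_le (by linarith)] at hu
  exact (sqrt_sq_sub_sq_div_add_eq hse (Ioc_subset_Icc_self hu)).symm

theorem integral_sqrt_sq_sub_sq_div_add (hs : 0 < s) (hse : s ≤ e) :
    ∫ u in -s..s, √(s ^ 2 - u ^ 2) / (u + e) = π * (e - √(e ^ 2 - s ^ 2)) := by
  rw [integral_congr fun u hu =>
      sqrt_sq_sub_sq_div_add_eq hse (by rwa [uIcc_of_le (by linarith)] at hu),
    integral_sub (intervalIntegrable_sub_div_sqrt_sq_sub_sq hs hse)
      (intervalIntegrable_sq_sub_sq_div_mul_sqrt hs hse),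
    integral_sub_div_sqrt_sq_sub_sq hs hse, integral_sq_sub_sq_div_mul_sqrt hs hse, mul_sub]

theorem intervalIntegrable_sqrt_sq_sub_sq_div_sub (hs : 0 < s) (hse : s ≤ e) :
    IntervalIntegrable (fun u => √(s ^ 2 - u ^ 2) / (e - u)) volume (-s) s := by
  have h := intervalIntegrable_sqrt_sq_sub_sq_div_add hs hse
  rw [IntervalIntegrable.iff_comp_neg, neg_neg] at h
  simpa [neg_add_eq_sub] using h.symm

theorem integral_sqrt_sq_sub_sq_div_sub (hs : 0 < s) (hse : s ≤ e) :
    ∫ u in -s..s, √(s ^ 2 - u ^ 2) / (e - u) = π * (e - √(e ^ 2 - s ^ 2)) := by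
  have h := integral_comp_neg (a := -s) (b := s) fun u => √(s ^ 2 - u ^ 2) / (u + e)
  rw [neg_neg] at h
  simpa [neg_add_eq_sub] using h.trans (integral_sqrt_sq_sub_sq_div_add hs hse)

end Semicircle

section PartialFractions

variable {s m z u : ℝ}

theorem sqrt_div_mul_mul_eq (hsm : s ≤ m) (hz : m + s < z) (hu : u ∈ Icc (-s) s) :
    √(s ^ 2 - u ^ 2) / ((u + m) * (u + m + 1)) / (z - (u + m))
      = 1 / z * (√(s ^ 2 - u ^ 2) / (u + m)) - 1 / (z + 1) * (√(s ^ 2 - u ^ 2) / (u + (m + 1)))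
        + 1 / (z * (z + 1)) * (√(s ^ 2 - u ^ 2) / (z - m - u)) := by
  rcases (sqrt_nonneg (s ^ 2 - u ^ 2)).eq_or_lt with ht | ht
  · simp [← ht]
  have hum : 0 < u + m := by nlinarith [hu.2, sqrt_pos.1 ht]
  have hum₁ : 0 < u + (m + 1) := by linarith
  have hzu : 0 < z - m - u := by linarith [hu.2]
  rw [add_assoc u m 1, show z - (u + m) = z - m - u by ring]
  have hz₀ : 0 < z := by linarith
  field_simp
  ring

theorem integral_Icc_sqrt_div_mul_mul (hs : 0 < s) (hsm : s ≤ m) (hz : m + s < z) :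
    ∫ x in Icc (m - s) (m + s), √(s ^ 2 - (x - m) ^ 2) / (x * (x + 1)) / (z - x)
      = π * ((m - √(m ^ 2 - s ^ 2)) / z - (m + 1 - √((m + 1) ^ 2 - s ^ 2)) / (z + 1)
        + (z - m - √((z - m) ^ 2 - s ^ 2)) / (z * (z + 1))) := by
  have hshift := integral_comp_add_right (a := -s) (b := s)
    (fun x => √(s ^ 2 - (x - m) ^ 2) / (x * (x + 1)) / (z - x)) m
  rw [neg_add_eq_sub, add_comm s] at hshift
  have hI₀ := intervalIntegrable_sqrt_sq_sub_sq_div_add hs hsm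
  have hI₁ := intervalIntegrable_sqrt_sq_sub_sq_div_add hs (by linarith : s ≤ m + 1)
  have hI₂ := intervalIntegrable_sqrt_sq_sub_sq_div_sub hs (by linarith : s ≤ z - m)
  rw [integral_Icc_eq_integral_Ioc, ← integral_of_le (by linarith), ← hshift]
  simp only [add_sub_cancel_right]
  rw [integral_congr fun u hu =>
      sqrt_div_mul_mul_eq hsm hz (by rwa [uIcc_of_le (by linarith)] at hu),
    integral_add ((hI₀.const_mul _).sub (hI₁.const_mul _)) (hI₂.const_mul _),
    integral_sub (hI₀.const_mul _) (hI₁.const_mul _), intervalIntegral.integral_const_mul,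
    intervalIntegral.integral_const_mul, intervalIntegral.integral_const_mul,
    integral_sqrt_sq_sub_sq_div_add hs hsm, integral_sqrt_sq_sub_sq_div_add hs (by linarith),
    integral_sqrt_sq_sub_sq_div_sub hs (by linarith)]
  ring

end PartialFractions

noncomputable def supportCenter (lam β : ℝ) : ℝ := ((1 + β) * lam + 2) / (lam ^ 2 * β)

noncomputable def supportRadius (lam β : ℝ) : ℝ :=
  2 * √(lam ^ 2 * β + lam * (β + 1) + 1) / (lam ^ 2 * β)

section Support

variable {lam β : ℝ}

theorem supportRadius_pos (hlam : 0 < lam) (hβ : 0 < β) : 0 < supportRadius lam β := by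
  unfold supportRadius
  have : 0 < √(lam ^ 2 * β + lam * (β + 1) + 1) := sqrt_pos.2 (by positivity)
  positivity

theorem supportRadius_le_supportCenter (hlam : 0 < lam) (hβ : 0 < β) :
    supportRadius lam β ≤ supportCenter lam β := by
  have hd := sq_sqrt (by positivity : 0 ≤ lam ^ 2 * β + lam * (β + 1) + 1)
  unfold supportRadius supportCenter
  gcongr
  exact le_of_sq_le_sq (by nlinarith [sq_nonneg (lam * (β - 1))]) (by positivity)

theorem density_radicand_eq (hlam : 0 < lam) (hβ : 0 < β) (x : ℝ) :
    -(β - 1) ^ 2 + 2 * β * ((1 + β) * lam + 2) * x - β ^ 2 * lam ^ 2 * x ^ 2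
      = (lam * β) ^ 2 * (supportRadius lam β ^ 2 - (x - supportCenter lam β) ^ 2) := by
  have hd := sq_sqrt (by positivity : 0 ≤ lam ^ 2 * β + lam * (β + 1) + 1)
  unfold supportRadius supportCenter
  generalize √(lam ^ 2 * β + lam * (β + 1) + 1) = d at hd ⊢
  field_simp
  linear_combination (-4 : ℝ) * hd

theorem sqrt_supportCenter_sq_sub_supportRadius_sq (hlam : 0 < lam) (hβ : 0 < β) :
    √(supportCenter lam β ^ 2 - supportRadius lam β ^ 2) = |β - 1| / (lam * β) := by
  rw [← abs_of_pos (by positivity : 0 < lam * β), ← abs_div, ← sqrt_sq_eq_abs]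
  congr 1
  field_simp
  linear_combination density_radicand_eq hlam hβ 0

theorem sqrt_supportCenter_add_one_sq_sub_supportRadius_sq (hlam : 0 < lam) (hβ : 0 < β) :
    √((supportCenter lam β + 1) ^ 2 - supportRadius lam β ^ 2)
      = (1 + β + lam * β) / (lam * β) := by
  rw [← sqrt_sq (by positivity : 0 ≤ (1 + β + lam * β) / (lam * β))]
  congr 1
  field_simp
  linear_combination density_radicand_eq hlam hβ (-1)

end Support

theorem stmt19 (lam β : ℝ) (hlam : 0 < lam) (hβ : 0 < β) :
    let x₁ := (1 / (lam ^ 2 * β)) *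
      ((1 + β) * lam + 2 - 2 * Real.sqrt (lam ^ 2 * β + lam * (β + 1) + 1))
    let x₂ := (1 / (lam ^ 2 * β)) *
      ((1 + β) * lam + 2 + 2 * Real.sqrt (lam ^ 2 * β + lam * (β + 1) + 1))
    ∀ z : ℝ, x₂ < z →
      (1 / (2 * z * (1 + z))) * (1 - β + (2 + lam * β) * z -
          Real.sqrt ((lam * β * z) ^ 2 - 2 * β * (lam * (1 + β) + 2) * z + (β - 1) ^ 2)) =
        (∫ x in Set.Icc x₁ x₂,
            (1 / (2 * Real.pi)) *
              Real.sqrt (-(β - 1) ^ 2 + 2 * β * ((1 + β) * lam + 2) * x -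
                β ^ 2 * lam ^ 2 * x ^ 2) / (x * (x + 1)) / (z - x)) +
          max (1 - β) 0 / z := by
  intro x₁ x₂ z hz
  set m := supportCenter lam β
  set s := supportRadius lam β
  have hx₁ : x₁ = m - s := by simp only [x₁, m, s, supportCenter, supportRadius]; ring
  have hx₂ : x₂ = m + s := by simp only [x₂, m, s, supportCenter, supportRadius]; ring
  rw [hx₂] at hz
  have hr : 0 < lam * β := by positivity
  have hdensity (x : ℝ) :
      1 / (2 * π) * √(-(β - 1) ^ 2 + 2 * β * ((1 + β) * lam + 2) * x - β ^ 2 * lam ^ 2 * x ^ 2)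
          / (x * (x + 1)) / (z - x)
        = lam * β / (2 * π) * (√(s ^ 2 - (x - m) ^ 2) / (x * (x + 1)) / (z - x)) := by
    rw [density_radicand_eq hlam hβ, sqrt_mul (sq_nonneg _), sqrt_sq hr.le]
    ring
  have hG : √((lam * β * z) ^ 2 - 2 * β * (lam * (1 + β) + 2) * z + (β - 1) ^ 2)
      = lam * β * √((z - m) ^ 2 - s ^ 2) := by
    rw [show (lam * β * z) ^ 2 - 2 * β * (lam * (1 + β) + 2) * z + (β - 1) ^ 2
        = (lam * β) ^ 2 * ((z - m) ^ 2 - s ^ 2) by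
          linear_combination -density_radicand_eq hlam hβ z,
      sqrt_mul (sq_nonneg _), sqrt_sq hr.le]
  have hatom : 2 * max (1 - β) 0 - |β - 1| = 1 - β := by
    rcases abs_cases (β - 1) with h | h <;> rcases max_cases (1 - β) 0 with h' | h' <;> linarith
  have hz₀ : 0 < z := by
    linarith [supportRadius_le_supportCenter hlam hβ, supportRadius_pos hlam hβ]
  simp only [hx₁, hx₂, hdensity]
  rw [MeasureTheory.integral_const_mul, integral_Icc_sqrt_div_mul_mul (supportRadius_pos hlam hβ)
      (supportRadius_le_supportCenter hlam hβ) hz,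
    sqrt_supportCenter_sq_sub_supportRadius_sq hlam hβ,
    sqrt_supportCenter_add_one_sq_sub_supportRadius_sq hlam hβ, hG]
  field_simp
  linear_combination -(1 + z) * (z + 1) * hatom
end
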